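/- Define φ : ℝ⁶ → ℝ⁶ by φ(x, y, a, b, c, κ) = (x, y, c/a, a^(−3), −3·b·a^(−5), 3·(5·b² − a²·κ)·a^(−7)) and ψ : ℝ⁶ → ℝ⁶ by ψ(x, z₀, z₁, z₂, z₃, z₄) = (x, z₀, z₂^(−1/3), −(1/3)·z₃·z₂^(−5/3), z₁·z₂^(−1/3), (1/9)·(5·z₃² − 3·z₂·z₄)·z₂^(−8/3)), where negative fractional powers of positive reals are taken via the real power function. Then ψ(φ(p)) = p for every p = (x, y, a, b, c, κ) with a > 0, and φ(ψ(q)) = q for every q = (x, z₀, z₁, z₂, z₃, z₄) with z₂ > 0. -/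
import Mathlib

/-- The local equivalence `φ` identifying the moving-frame Pfaffian system for
plane equi-affine curves with the contact system on `J⁴(ℝ,ℝ)`; source
coordinates `(x, y, a, b, c, κ) = (p 0, …, p 5)`. -/
noncomputable def phiMap (p : Fin 6 → ℝ) : Fin 6 → ℝ :=
  ![p 0, p 1, p 4 / p 2, (p 2) ^ (-(3 : ℤ)), -3 * p 3 * (p 2) ^ (-(5 : ℤ)),
    3 * (5 * (p 3) ^ 2 - (p 2) ^ 2 * p 5) * (p 2) ^ (-(7 : ℤ))]

/-- The local inverse `ψ` of `φ`; target coordinates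
`(x, z₀, z₁, z₂, z₃, z₄) = (q 0, …, q 5)`. -/
noncomputable def psiMap (q : Fin 6 → ℝ) : Fin 6 → ℝ :=
  ![q 0, q 1, (q 3) ^ (-(1 : ℝ) / 3), -(1 / 3) * q 4 * (q 3) ^ (-(5 : ℝ) / 3),
    q 2 * (q 3) ^ (-(1 : ℝ) / 3),
    (1 / 9) * (5 * (q 4) ^ 2 - 3 * q 3 * q 5) * (q 3) ^ (-(8 : ℝ) / 3)]

lemma zr_pow (a : ℝ) (ha : 0 < a) (m : ℤ) (r : ℝ) : ((a ^ m) ^ r) = a ^ ((m : ℝ) * r) := by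
  rw [← Real.rpow_intCast a m, ← Real.rpow_mul ha.le]

lemma aux_u (a : ℝ) (ha : 0 < a) (n : ℕ) : (a ^ ((1:ℝ)/3)) ^ n = a ^ ((n : ℝ)/3) := by
  rw [← Real.rpow_natCast (a ^ ((1:ℝ)/3)) n, ← Real.rpow_mul ha.le]
  ring_nf

lemma aux_neg (a : ℝ) (ha : 0 < a) (n : ℕ) :
    a ^ (-(n:ℝ)/3) = ((a ^ ((1:ℝ)/3)) ^ n)⁻¹ := by
  rw [aux_u a ha n, neg_div, Real.rpow_neg ha.le]

/-- `ψ` is a two-sided inverse of `φ` on the sets `a > 0` and `z₂ > 0`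
respectively. -/
theorem phi_psi_inverse :
    (∀ p : Fin 6 → ℝ, 0 < p 2 → psiMap (phiMap p) = p) ∧
    (∀ q : Fin 6 → ℝ, 0 < q 3 → phiMap (psiMap q) = q) := by
  constructor
  · intro p hp
    have hne : p 2 ≠ 0 := hp.ne'
    funext i
    fin_cases i
    · rfl
    · rfl
    · show ((p 2) ^ (-(3:ℤ))) ^ (-(1:ℝ)/3) = p 2
      rw [zr_pow _ hp]; norm_num
    · show -(1/3) * (-3 * p 3 * (p 2) ^ (-(5:ℤ))) * ((p 2) ^ (-(3:ℤ))) ^ (-(5:ℝ)/3) = p 3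
      rw [zr_pow _ hp, show ((-3:ℤ):ℝ) * (-(5:ℝ)/3) = ((5:ℕ):ℝ) by norm_num,
        Real.rpow_natCast]
      simp only [zpow_neg, zpow_ofNat]
      field_simp
    · show (p 4 / p 2) * ((p 2) ^ (-(3:ℤ))) ^ (-(1:ℝ)/3) = p 4
      rw [zr_pow _ hp, show ((-3:ℤ):ℝ) * (-(1:ℝ)/3) = ((1:ℕ):ℝ) by norm_num,
        Real.rpow_natCast]
      field_simp
    · show (1/9) * (5 * (-3 * p 3 * (p 2) ^ (-(5:ℤ)))^2
            - 3 * ((p 2) ^ (-(3:ℤ))) * (3 * (5 * (p 3)^2 - (p 2)^2 * p 5) * (p 2) ^ (-(7:ℤ))))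
            * ((p 2) ^ (-(3:ℤ))) ^ (-(8:ℝ)/3) = p 5
      rw [zr_pow _ hp, show ((-3:ℤ):ℝ) * (-(8:ℝ)/3) = ((8:ℕ):ℝ) by norm_num,
        Real.rpow_natCast]
      simp only [zpow_neg, zpow_ofNat]
      field_simp
      ring
  · intro q hq
    have hne : q 3 ≠ 0 := hq.ne'
    set u : ℝ := (q 3) ^ ((1:ℝ)/3) with hu_def
    have hu : 0 < u := Real.rpow_pos_of_pos hq _
    have hune : u ≠ 0 := hu.ne'
    have h3 : u ^ 3 = q 3 := by
      rw [hu_def, aux_u _ hq 3]; norm_num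
    have e1 : (q 3) ^ (-(1:ℝ)/3) = u⁻¹ := by
      have := aux_neg (q 3) hq 1; simp only [Nat.cast_one, pow_one] at this; rw [hu_def]; exact this
    have e5 : (q 3) ^ (-(5:ℝ)/3) = (u ^ 5)⁻¹ := by
      have := aux_neg (q 3) hq 5; rw [hu_def]; exact_mod_cast this
    have e8 : (q 3) ^ (-(8:ℝ)/3) = (u ^ 8)⁻¹ := by
      have := aux_neg (q 3) hq 8; rw [hu_def]; exact_mod_cast this
    funext i
    fin_cases i
    · rfl
    · rfl
    · show (q 2 * (q 3) ^ (-(1:ℝ)/3)) / ((q 3) ^ (-(1:ℝ)/3)) = q 2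
      rw [e1]; field_simp
    · show ((q 3) ^ (-(1:ℝ)/3)) ^ (-(3:ℤ)) = q 3
      rw [e1, zpow_neg, inv_zpow, inv_inv, zpow_ofNat, h3]
    · show -3 * (-(1/3) * q 4 * (q 3) ^ (-(5:ℝ)/3)) * ((q 3) ^ (-(1:ℝ)/3)) ^ (-(5:ℤ)) = q 4
      rw [e1, e5, zpow_neg, inv_zpow, inv_inv, zpow_ofNat]
      field_simp
    · show 3 * (5 * (-(1/3) * q 4 * (q 3) ^ (-(5:ℝ)/3))^2
            - ((q 3) ^ (-(1:ℝ)/3))^2 * ((1/9) * (5 * (q 4)^2 - 3 * q 3 * q 5) * (q 3) ^ (-(8:ℝ)/3)))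
            * ((q 3) ^ (-(1:ℝ)/3)) ^ (-(7:ℤ)) = q 5
      rw [e1, e5, e8, zpow_neg, inv_zpow, inv_inv, zpow_ofNat, ← h3]
      field_simp
      ring
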